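/- arXiv:1001.2299 — 2 statements merged into one kernel-verified Lean document; each statement's English description precedes it below -/
import Mathlib

section
/- For any κ ∈ ℝ and any metric space X with geodesics σ, τ issuing from p toward q and r, the Alexandrov angle ∠_p(q,r) (defined via comparison triangles in the Euclidean plane) equals lim_{ε→0} sup_{0<t,t'<ε} ∠_p^{(κ)}(σ(t),τ(t')), where ∠_p^{(κ)} denotes the vertex angle of the comparison triangle in the model space M_κ². -/
open Set

/-- The vertex angle of the comparison triangle in the model space `M_κ²` with side
lengths `a`, `b` adjacent to the vertex and `c` opposite, via the law of cosines of
constant curvature `κ` (hyperbolic for `κ < 0`, Euclidean for `κ = 0`, spherical for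
`κ > 0`). -/
noncomputable def cmpAngle (κ a b c : ℝ) : ℝ :=
  if κ < 0 then
    Real.arccos ((Real.cosh (Real.sqrt (-κ) * a) * Real.cosh (Real.sqrt (-κ) * b) -
        Real.cosh (Real.sqrt (-κ) * c)) /
      (Real.sinh (Real.sqrt (-κ) * a) * Real.sinh (Real.sqrt (-κ) * b)))
  else if κ = 0 then Real.arccos ((a ^ 2 + b ^ 2 - c ^ 2) / (2 * a * b))
  else
    Real.arccos ((Real.cos (Real.sqrt κ * c) - Real.cos (Real.sqrt κ * a) *
        Real.cos (Real.sqrt κ * b)) /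
      (Real.sin (Real.sqrt κ * a) * Real.sin (Real.sqrt κ * b)))

/-- The upper angle at `p` between the paths `σ` and `τ` issuing from `p`, measured by
comparison triangles in the model space `M_κ²`:
`lim_{ε→0} sup_{0<t,t<ε} ∠_p^{(κ)}(σ t, τ t)`.  Since the supremum is monotone in
`ε`, the limit is the infimum over `ε > 0`. -/
noncomputable def alexAngleWith (κ : ℝ) {X : Type*} [MetricSpace X] (p : X)
    (σ τ : ℝ → X) : ℝ :=
  ⨅ ε : {e : ℝ // 0 < e},
    sSup (Set.image
        (fun tt : ℝ × ℝ => cmpAngle κ (dist p (σ tt.1)) (dist p (τ tt.2)) (dist (σ tt.1) (τ tt.2)))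
        (Set.Ioo 0 (ε : ℝ) ×ˢ Set.Ioo 0 (ε : ℝ)))

/-!
By the half-angle formula, `1 - cos` of the comparison angle in `M_κ²` is
`versine (sn κ) a b c`, a quotient of values of `sn_κ` at points of `[0, max a b]`. Since
`sn_κ' = cs_κ → 1` at `0`, the mean value theorem traps `sn_κ t / t` between `u⁻¹` and `u` with
`u → 1` as the triangle shrinks, so this versine is uniformly close to its Euclidean value
`versine id a b c`. Uniform continuity of `arccos` then makes `∠^(κ) - ∠^(0)` uniformly small on
small triangles, and along the geodesics the sides at `p` are `t` and `t'`, which are small near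
the corner of the square over which both upper limits are taken.
-/

open Real Filter Topology Bornology

/-- `sn κ` and `cs κ` are the generalized sine and cosine `sn_κ`, `cs_κ` of comparison
geometry: the solutions of `f'' + κ f = 0` with initial values `(0, 1)` and `(1, 0)`. -/
noncomputable def sn (κ x : ℝ) : ℝ :=
  if κ < 0 then sinh (√(-κ) * x) / √(-κ) else if κ = 0 then x else sin (√κ * x) / √κ

noncomputable def cs (κ x : ℝ) : ℝ :=
  if κ < 0 then cosh (√(-κ) * x) else if κ = 0 then 1 else cos (√κ * x)

/-- Half-angle formula: in a triangle of `M_κ²` with sides `a`, `b` adjacent to the angle `γ`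
and `c` opposite, `1 - cos γ = versine (sn κ) a b c`. -/
noncomputable def versine (S : ℝ → ℝ) (a b c : ℝ) : ℝ :=
  2 * S ((c + a - b) / 2) * S ((c - a + b) / 2) / (S a * S b)

lemma sn_zero_left : sn 0 = id := by
  funext x; simp [sn]

lemma sn_zero_right (κ : ℝ) : sn κ 0 = 0 := by
  simp [sn]

lemma cs_zero_right (κ : ℝ) : cs κ 0 = 1 := by
  simp [cs]

lemma continuous_cs (κ : ℝ) : Continuous (cs κ) := by
  unfold cs; split_ifs <;> fun_prop

lemma hasDerivAt_sn (κ x : ℝ) : HasDerivAt (sn κ) (cs κ x) x := by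
  unfold sn cs
  split_ifs with hneg hzero
  · have h := (((hasDerivAt_id' x).const_mul √(-κ)).sinh).div_const √(-κ)
    rwa [mul_one, mul_div_cancel_right₀ _ (sqrt_pos.2 (neg_pos.2 hneg)).ne'] at h
  · exact hasDerivAt_id x
  · have h := (((hasDerivAt_id' x).const_mul √κ).sin).div_const √κ
    rwa [mul_one, mul_div_cancel_right₀ _ (sqrt_pos.2 (by order)).ne'] at h

lemma cosh_mul_cosh_sub_cosh (A B C : ℝ) :
    cosh A * cosh B - cosh C =
      sinh A * sinh B - 2 * sinh ((C + A - B) / 2) * sinh ((C - A + B) / 2) := by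
  have hC : cosh C = cosh ((C + A - B) / 2 + (C - A + B) / 2) := by ring_nf
  have hAB : cosh (A - B) = cosh ((C + A - B) / 2 - (C - A + B) / 2) := by ring_nf
  rw [cosh_add] at hC
  rw [cosh_sub, cosh_sub] at hAB
  linarith

lemma cos_sub_cos_mul_cos (A B C : ℝ) :
    cos C - cos A * cos B =
      sin A * sin B - 2 * sin ((C + A - B) / 2) * sin ((C - A + B) / 2) := by
  have h := cos_sub_cos C (A - B)
  rw [cos_sub, show C - (A - B) = C - A + B by ring, show C + (A - B) = C + A - B by ring] at h
  linarith

lemma cmpAngle_eq_arccos_one_sub_versine (κ : ℝ) {a b c : ℝ} (ha : sn κ a ≠ 0)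
    (hb : sn κ b ≠ 0) : cmpAngle κ a b c = arccos (1 - versine (sn κ) a b c) := by
  unfold cmpAngle versine sn at *
  split_ifs at * with hneg hzero <;> congr 1
  · set s := √(-κ)
    obtain ⟨ha, hs⟩ := div_ne_zero_iff.1 ha
    obtain ⟨hb, -⟩ := div_ne_zero_iff.1 hb
    rw [cosh_mul_cosh_sub_cosh, show (s * c + s * a - s * b) / 2 = s * ((c + a - b) / 2) by ring,
      show (s * c - s * a + s * b) / 2 = s * ((c - a + b) / 2) by ring]
    field_simp
  · field_simp
    ring
  · set s := √κ
    obtain ⟨ha, hs⟩ := div_ne_zero_iff.1 ha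
    obtain ⟨hb, -⟩ := div_ne_zero_iff.1 hb
    rw [cos_sub_cos_mul_cos, show (s * c + s * a - s * b) / 2 = s * ((c + a - b) / 2) by ring,
      show (s * c - s * a + s * b) / 2 = s * ((c - a + b) / 2) by ring]
    field_simp

lemma uniformContinuous_arccos : UniformContinuous arccos := by
  have h : arccos = (fun x : Icc (-1 : ℝ) 1 => arccos x) ∘ projIcc (-1) 1 (by norm_num) := by
    funext x
    simp [arccos, arcsin_projIcc]
  rw [h]
  exact (CompactSpace.uniformContinuous_of_continuous (by fun_prop)).comp
    (LipschitzWith.projIcc _).uniformContinuous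

lemma mul_le_and_le_mul_of_hasDerivAt {f f' : ℝ → ℝ} {m K M x : ℝ}
    (hf : ∀ y, HasDerivAt f (f' y) y) (hf0 : f 0 = 0) (hf' : ∀ y ∈ Icc 0 M, f' y ∈ Icc m K)
    (hx : x ∈ Icc 0 M) : m * x ≤ f x ∧ f x ≤ K * x := by
  have hcont : ContinuousOn f (Icc 0 M) := fun y _ => (hf y).continuousAt.continuousWithinAt
  have hdiff : DifferentiableOn ℝ f (interior (Icc 0 M)) :=
    fun y _ => (hf y).differentiableAt.differentiableWithinAt
  have h0 : (0 : ℝ) ∈ Icc 0 M := left_mem_Icc.2 (hx.1.trans hx.2)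
  have hlo := (convex_Icc 0 M).mul_sub_le_image_sub_of_le_deriv hcont hdiff
    (fun y hy => (hf y).deriv ▸ (hf' y (interior_subset hy)).1) 0 h0 x hx hx.1
  have hhi := (convex_Icc 0 M).image_sub_le_mul_sub_of_deriv_le hcont hdiff
    (fun y hy => (hf y).deriv ▸ (hf' y (interior_subset hy)).2) 0 h0 x hx hx.1
  simp only [sub_zero, hf0] at hlo hhi
  exact ⟨hlo, hhi⟩

lemma abs_sub_le_mul_sub_one {E Q v : ℝ} (hE : 0 ≤ E) (hv : 1 ≤ v) (hlo : E / v ≤ Q)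
    (hhi : Q ≤ E * v) : |Q - E| ≤ E * (v - 1) := by
  have hdiv : E * (2 - v) ≤ E / v := by
    rw [le_div_iff₀ (by positivity)]
    nlinarith [mul_nonneg hE (sq_nonneg (v - 1))]
  rw [abs_sub_le_iff]
  constructor <;> nlinarith

section Versine

variable {a b c : ℝ} (ha : 0 < a) (hb : 0 < b) (hc : |a - b| ≤ c) (hc' : c ≤ a + b)
include ha hb hc hc'

lemma versine_id_mem_Icc : versine id a b c ∈ Icc 0 2 := by
  obtain ⟨hc₁, hc₂⟩ := abs_le.1 hc
  have hx : 0 ≤ (c + a - b) / 2 := by linarith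
  have hy : 0 ≤ (c - a + b) / 2 := by linarith
  have hE : versine id a b c = 2 * ((c + a - b) / 2) * ((c - a + b) / 2) / (a * b) := rfl
  refine ⟨hE ▸ div_nonneg (by positivity) (by positivity), ?_⟩
  rw [hE, div_le_iff₀ (by positivity)]
  nlinarith [mul_le_mul (show (c + a - b) / 2 ≤ a by linarith)
    (show (c - a + b) / 2 ≤ b by linarith) hy ha.le]

variable {S : ℝ → ℝ} {u M : ℝ} (hu : 0 < u) (hS : ∀ x ∈ Icc 0 M, u⁻¹ * x ≤ S x ∧ S x ≤ u * x)
  (haM : a ≤ M) (hbM : b ≤ M)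
include hu hS haM hbM

lemma versine_mem_Icc_versine_id :
    versine S a b c ∈ Icc (versine id a b c / u ^ 4) (versine id a b c * u ^ 4) := by
  obtain ⟨hc₁, hc₂⟩ := abs_le.1 hc
  set x := (c + a - b) / 2 with hx_def
  set y := (c - a + b) / 2 with hy_def
  have hx : 0 ≤ x := by linarith
  have hy : 0 ≤ y := by linarith
  obtain ⟨hSx, hSx'⟩ := hS x ⟨hx, by linarith⟩
  obtain ⟨hSy, hSy'⟩ := hS y ⟨hy, by linarith⟩
  obtain ⟨hSa, hSa'⟩ := hS a ⟨ha.le, haM⟩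
  obtain ⟨hSb, hSb'⟩ := hS b ⟨hb.le, hbM⟩
  have hSx0 : 0 ≤ S x := (mul_nonneg (by positivity) hx).trans hSx
  have hSy0 : 0 ≤ S y := (mul_nonneg (by positivity) hy).trans hSy
  have hE : versine id a b c = 2 * x * y / (a * b) := rfl
  have hQ : versine S a b c = 2 * S x * S y / (S a * S b) := rfl
  constructor
  · calc versine id a b c / u ^ 4 = 2 * (u⁻¹ * x) * (u⁻¹ * y) / ((u * a) * (u * b)) := by
          rw [hE]; field_simp
      _ ≤ versine S a b c := by
          rw [hQ]
          apply div_le_div₀ (by positivity) _ (mul_pos (hSa.trans_lt' (by positivity))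
            (hSb.trans_lt' (by positivity))) (mul_le_mul hSa' hSb' (hSb.trans' (by positivity))
            (by positivity))
          nlinarith [mul_le_mul hSx hSy (mul_nonneg (by positivity) hy) hSx0]
  · calc versine S a b c ≤ 2 * (u * x) * (u * y) / ((u⁻¹ * a) * (u⁻¹ * b)) := by
          rw [hQ]
          apply div_le_div₀ (by positivity) _ (by positivity) (mul_le_mul hSa hSb
            (by positivity) (hSa.trans' (by positivity)))
          nlinarith [mul_le_mul hSx' hSy' hSy0 (by positivity)]
      _ = versine id a b c * u ^ 4 := by rw [hE]; field_simp

lemma abs_versine_sub_versine_id_le : |versine S a b c - versine id a b c| ≤ 2 * (u ^ 4 - 1) := by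
  obtain ⟨hE0, hE2⟩ := versine_id_mem_Icc ha hb hc hc'
  obtain ⟨hlo, hhi⟩ := versine_mem_Icc_versine_id ha hb hc hc' hu hS haM hbM
  have hu1 : 1 ≤ u := by
    obtain ⟨hSa, hSa'⟩ := hS a ⟨ha.le, haM⟩
    by_contra! h
    nlinarith [(one_lt_inv₀ hu).2 h]
  have hu4 : 1 ≤ u ^ 4 := one_le_pow₀ hu1
  calc |versine S a b c - versine id a b c| ≤ versine id a b c * (u ^ 4 - 1) :=
        abs_sub_le_mul_sub_one hE0 hu4 hlo hhi
    _ ≤ 2 * (u ^ 4 - 1) := by gcongr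

end Versine

lemma exists_abs_cmpAngle_sub_cmpAngle_zero_le (κ : ℝ) {δ : ℝ} (hδ : 0 < δ) :
    ∃ ε > 0, ∀ a b c, 0 < a → a ≤ ε → 0 < b → b ≤ ε → |a - b| ≤ c → c ≤ a + b →
      |cmpAngle κ a b c - cmpAngle 0 a b c| ≤ δ := by
  obtain ⟨η, hη, harccos⟩ := Metric.uniformContinuous_iff_le.1 uniformContinuous_arccos δ hδ
  obtain ⟨u, hu, hu1⟩ : ∃ u, 2 * (u ^ 4 - 1) ≤ η ∧ 1 < u := by
    have h : Tendsto (fun u : ℝ => 2 * (u ^ 4 - 1)) (𝓝[>] 1) (𝓝 0) := by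
      have : Continuous (fun u : ℝ => 2 * (u ^ 4 - 1)) := by fun_prop
      simpa using (this.tendsto 1).mono_left nhdsWithin_le_nhds
    exact ((h.eventually (ge_mem_nhds hη)).and self_mem_nhdsWithin).exists
  obtain ⟨r, hr, hball⟩ := Metric.isOpen_iff.1
    ((isOpen_Ioo (a := u⁻¹) (b := u)).preimage (continuous_cs κ)) 0
    (by simp [cs_zero_right, inv_lt_one_of_one_lt₀ hu1, hu1])
  have hsn : ∀ x ∈ Icc 0 (r / 2), u⁻¹ * x ≤ sn κ x ∧ sn κ x ≤ u * x := fun x hx =>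
    mul_le_and_le_mul_of_hasDerivAt (hasDerivAt_sn κ) (sn_zero_right κ)
      (fun y hy => Ioo_subset_Icc_self <| hball <| by
        rw [mem_ball_zero_iff, norm_of_nonneg hy.1]; linarith [hy.2]) hx
  have hsn_ne : ∀ x, 0 < x → x ≤ r / 2 → sn κ x ≠ 0 := fun x hx hxr =>
    ((hsn x ⟨hx.le, hxr⟩).1.trans_lt' (by positivity)).ne'
  refine ⟨r / 2, by positivity, fun a b c ha haε hb hbε hc hc' => ?_⟩
  rw [cmpAngle_eq_arccos_one_sub_versine κ (hsn_ne a ha haε) (hsn_ne b hb hbε),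
    cmpAngle_eq_arccos_one_sub_versine 0 (by simpa [sn_zero_left] using ha.ne')
      (by simpa [sn_zero_left] using hb.ne'), sn_zero_left]
  have hversine := abs_versine_sub_versine_id_le ha hb hc hc' (by positivity) hsn haε hbε
  rw [← Real.dist_eq]
  apply harccos
  rw [Real.dist_eq, sub_sub_sub_cancel_left, abs_sub_comm]
  exact hversine.trans hu

lemma cmpAngle_mem_Icc (κ a b c : ℝ) : cmpAngle κ a b c ∈ Icc 0 π := by
  unfold cmpAngle
  split_ifs <;> exact ⟨arccos_nonneg _, arccos_le_pi _⟩

noncomputable def upperLimitAtOrigin (F : ℝ × ℝ → ℝ) : ℝ :=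
  ⨅ ε : {e : ℝ // 0 < e}, sSup (F '' (Ioo 0 (ε : ℝ) ×ˢ Ioo 0 (ε : ℝ)))

lemma upperLimitAtOrigin_le {F G : ℝ × ℝ → ℝ} (hF : IsBounded (range F))
    (hG : BddAbove (range G))
    (h : ∀ δ > 0, ∃ ε > 0, ∀ t ∈ Ioo 0 ε, ∀ t' ∈ Ioo 0 ε, F (t, t') ≤ G (t, t') + δ) :
    upperLimitAtOrigin F ≤ upperLimitAtOrigin G := by
  have hne : ∀ ε : ℝ, 0 < ε → (Ioo 0 ε ×ˢ Ioo 0 ε).Nonempty := fun ε hε =>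
    (nonempty_Ioo.2 hε).prod (nonempty_Ioo.2 hε)
  have hFsup : BddBelow (range fun ε : {e : ℝ // 0 < e} =>
      sSup (F '' (Ioo 0 (ε : ℝ) ×ˢ Ioo 0 (ε : ℝ)))) := by
    obtain ⟨m, hm⟩ := hF.bddBelow
    refine ⟨m, forall_mem_range.2 fun ε => ?_⟩
    obtain ⟨x, hx⟩ := hne ε ε.2
    exact le_csSup_of_le (hF.bddAbove.mono (image_subset_range _ _)) (mem_image_of_mem F hx)
      (hm (mem_range_self x))
  refine le_of_forall_pos_le_add fun δ hδ => ?_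
  obtain ⟨ε₀, hε₀, hFG⟩ := h δ hδ
  refine sub_le_iff_le_add.1 (le_ciInf fun ε => sub_le_iff_le_add.2 ?_)
  set ε' : {e : ℝ // 0 < e} := ⟨min ε ε₀, lt_min ε.2 hε₀⟩
  have hsub : Ioo 0 (ε' : ℝ) ×ˢ Ioo 0 (ε' : ℝ) ⊆ Ioo 0 (ε : ℝ) ×ˢ Ioo 0 (ε : ℝ) :=
    prod_mono (Ioo_subset_Ioo_right (min_le_left _ _)) (Ioo_subset_Ioo_right (min_le_left _ _))
  calc upperLimitAtOrigin F ≤ sSup (F '' (Ioo 0 (ε' : ℝ) ×ˢ Ioo 0 (ε' : ℝ))) :=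
        ciInf_le hFsup ε'
    _ ≤ sSup (G '' (Ioo 0 (ε : ℝ) ×ˢ Ioo 0 (ε : ℝ))) + δ := by
        refine csSup_le ((hne ε' ε'.2).image F) ?_
        rintro _ ⟨⟨t, t'⟩, ⟨ht, ht'⟩, rfl⟩
        have hε₀' : (ε' : ℝ) ≤ ε₀ := min_le_right _ _
        refine (hFG t ⟨ht.1, ht.2.trans_le hε₀'⟩ t' ⟨ht'.1, ht'.2.trans_le hε₀'⟩).trans ?_
        gcongr
        exact le_csSup (hG.mono (image_subset_range _ _)) (mem_image_of_mem G (hsub ⟨ht, ht'⟩))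

lemma upperLimitAtOrigin_eq {F G : ℝ × ℝ → ℝ} (hF : IsBounded (range F))
    (hG : IsBounded (range G))
    (h : ∀ δ > 0, ∃ ε > 0, ∀ t ∈ Ioo 0 ε, ∀ t' ∈ Ioo 0 ε, |F (t, t') - G (t, t')| ≤ δ) :
    upperLimitAtOrigin F = upperLimitAtOrigin G := by
  refine le_antisymm (upperLimitAtOrigin_le hF hG.bddAbove fun δ hδ => ?_)
    (upperLimitAtOrigin_le hG hF.bddAbove fun δ hδ => ?_) <;>
  obtain ⟨ε, hε, hFG⟩ := h δ hδ <;>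
  refine ⟨ε, hε, fun t ht t' ht' => ?_⟩ <;>
  linarith [abs_le.1 (hFG t ht t' ht')]

lemma dist_eq_of_geodesic {X : Type*} [MetricSpace X] {p : X} {σ : ℝ → X} {L t : ℝ}
    (hσ0 : σ 0 = p) (hσ : ∀ s ∈ Icc 0 L, ∀ t ∈ Icc 0 L, dist (σ s) (σ t) = |s - t|)
    (ht : t ∈ Icc 0 L) : dist p (σ t) = t := by
  rw [← hσ0, hσ 0 (left_mem_Icc.2 (ht.1.trans ht.2)) t ht, zero_sub, abs_neg,
    abs_of_nonneg ht.1]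

theorem alexAngle_model_indep_general (κ : ℝ) {X : Type*} [MetricSpace X]
    (p : X) (σ τ : ℝ → X) (Lσ Lτ : ℝ) (hLσ : 0 < Lσ) (hLτ : 0 < Lτ)
    (hσ0 : σ 0 = p) (hτ0 : τ 0 = p)
    (hσ : ∀ s ∈ Set.Icc 0 Lσ, ∀ t ∈ Set.Icc 0 Lσ, dist (σ s) (σ t) = |s - t|)
    (hτ : ∀ s ∈ Set.Icc 0 Lτ, ∀ t ∈ Set.Icc 0 Lτ, dist (τ s) (τ t) = |s - t|) :
    alexAngleWith κ p σ τ = alexAngleWith 0 p σ τ := by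
  have hbdd (k : ℝ) : IsBounded (range fun tt : ℝ × ℝ =>
      cmpAngle k (dist p (σ tt.1)) (dist p (τ tt.2)) (dist (σ tt.1) (τ tt.2))) :=
    (Metric.isBounded_Icc 0 π).subset (range_subset_iff.2 fun _ => cmpAngle_mem_Icc ..)
  refine upperLimitAtOrigin_eq (hbdd κ) (hbdd 0) fun δ hδ => ?_
  obtain ⟨ε, hε, hclose⟩ := exists_abs_cmpAngle_sub_cmpAngle_zero_le κ hδ
  refine ⟨min ε (min Lσ Lτ), by positivity, fun t ht t' ht' => ?_⟩
  have hσt : dist p (σ t) = t := dist_eq_of_geodesic hσ0 hσ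
    ⟨ht.1.le, ht.2.le.trans ((min_le_right _ _).trans (min_le_left _ _))⟩
  have hτt' : dist p (τ t') = t' := dist_eq_of_geodesic hτ0 hτ
    ⟨ht'.1.le, ht'.2.le.trans ((min_le_right _ _).trans (min_le_right _ _))⟩
  have hside : |dist p (σ t) - dist p (τ t')| ≤ dist (σ t) (τ t') := by
    simpa only [dist_comm p] using abs_dist_sub_le (σ t) (τ t') p
  have htri : dist (σ t) (τ t') ≤ dist p (σ t) + dist p (τ t') := dist_triangle_left _ _ p
  rw [hσt, hτt'] at hside htri
  simp only [hσt, hτt']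
  exact hclose t t' _ ht.1 (ht.2.le.trans (min_le_left _ _)) ht'.1
    (ht'.2.le.trans (min_le_left _ _)) hside htri

/-- For any κ and any two geodesics issuing from `p` in a metric space,
the Alexandrov angle (defined by Euclidean comparison triangles, i.e. κ = 0) equals
the corresponding limit of comparison angles in the model space `M_κ²`. -/
theorem alexAngle_model_indep (κ : ℝ) {X : Type*} [MetricSpace X]
    (p q r : X) (σ τ : ℝ → X) (Lσ Lτ : ℝ) (hLσ : 0 < Lσ) (hLτ : 0 < Lτ)
    (hσ0 : σ 0 = p) (hτ0 : τ 0 = p) (hσq : σ Lσ = q) (hτr : τ Lτ = r)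
    (hσ : ∀ s ∈ Set.Icc 0 Lσ, ∀ t ∈ Set.Icc 0 Lσ, dist (σ s) (σ t) = |s - t|)
    (hτ : ∀ s ∈ Set.Icc 0 Lτ, ∀ t ∈ Set.Icc 0 Lτ, dist (τ s) (τ t) = |s - t|) :
    alexAngleWith κ p σ τ = alexAngleWith 0 p σ τ :=
  alexAngle_model_indep_general κ p σ τ Lσ Lτ hLσ hLτ hσ0 hτ0 hσ hτ
end

section
/- Let X be a metric space and c, c', c'' three geodesic paths in X issuing from the same point p. Then the Alexandrov angles satisfy the triangle inequality ∠(c',c'') ≤ ∠(c,c') + ∠(c,c''). -/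
open Set

/-!
Suppose `∠(c', c'') > ∠(c, c') + ∠(c, c'')` and pick `ψ > ∠(c, c')`, `χ > ∠(c, c'')` with
`ψ + χ < ∠(c', c'')`. Take small `t₁, t₂` for which the comparison angle at `p` between
`c' t₁` and `c'' t₂` exceeds `ψ + χ`. In the plane, put `y'` and `z'` at distances `t₁`, `t₂`
from the origin, making angles `ψ` and `χ` with the positive real axis on either side of it;
the segment `[y', z']` crosses that axis at some `x'` with `|x'| = t ≤ max t₁ t₂`. As `c` is
geodesic, `d(p, c t) = t`, and the angle bounds give `d(c t, c' t₁) ≤ |x' y'|` and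
`d(c t, c'' t₂) ≤ |x' z'|`, so the triangle inequality in `X` yields
`d(c' t₁, c'' t₂) ≤ |x' y'| + |x' z'| = |y' z'| < d(c' t₁, c'' t₂)`.
-/

open Real

noncomputable def cosineLawSide (a b θ : ℝ) : ℝ :=
  √(a ^ 2 + b ^ 2 - 2 * a * b * cos θ)

lemma cosineLawSide_neg (a b θ : ℝ) : cosineLawSide a b (-θ) = cosineLawSide a b θ := by
  rw [cosineLawSide, cos_neg, cosineLawSide]

open Complex in
lemma cosineLawSide_sub_eq_norm (a b α β : ℝ) :
    cosineLawSide a b (α - β) = ‖(a : ℂ) * exp (α * I) - b * exp (β * I)‖ := by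
  rw [cosineLawSide, ← Real.sqrt_sq (norm_nonneg _), Complex.sq_norm, Complex.normSq_apply]
  simp only [sub_re, sub_im, re_ofReal_mul, im_ofReal_mul, exp_ofReal_mul_I_re,
    exp_ofReal_mul_I_im]
  rw [Real.cos_sub]
  congr 1
  linear_combination -a ^ 2 * Real.sin_sq_add_cos_sq α - b ^ 2 * Real.sin_sq_add_cos_sq β

open Complex in
lemma exists_ofReal_mem_segment_mul_exp {r s ψ χ : ℝ} (hr : 0 < r) (hs : 0 < s) (hψ : 0 < ψ)
    (hχ : 0 < χ) (hψχ : ψ + χ < π) :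
    ∃ t : ℝ, 0 < t ∧ t ≤ max r s ∧
      (t : ℂ) ∈ segment ℝ (r * exp (ψ * I)) (s * exp (↑(-χ) * I)) := by
  have hsψ : 0 < Real.sin ψ := sin_pos_of_pos_of_lt_pi hψ (by linarith)
  have hsχ : 0 < Real.sin χ := sin_pos_of_pos_of_lt_pi hχ (by linarith)
  set D := r * Real.sin ψ + s * Real.sin χ with hD_def
  have hD : 0 < D := by positivity
  -- `l` is chosen to make the imaginary part vanish.
  set l := r * Real.sin ψ / D with hl_def
  have hl : 0 ≤ l := by positivity
  have hl' : 1 - l = s * Real.sin χ / D := by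
    rw [eq_div_iff hD.ne', sub_mul, hl_def, div_mul_cancel₀ _ hD.ne', hD_def]; ring
  have hl'_nonneg : 0 ≤ 1 - l := hl' ▸ by positivity
  set t := (1 - l) * r * Real.cos ψ + l * s * Real.cos χ with ht_def
  have ht : 0 < t := by
    have ht_eq : t = r * s * Real.sin (ψ + χ) / D := by
      rw [ht_def, Real.sin_add, hl', hl_def]; field_simp; ring
    have := sin_pos_of_pos_of_lt_pi (by linarith) hψχ
    rw [ht_eq]; positivity
  have htmax : t ≤ max r s := calc
    t ≤ (1 - l) * r + l * s := by
      have := mul_le_mul_of_nonneg_left (cos_le_one ψ) (by positivity : 0 ≤ (1 - l) * r)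
      have := mul_le_mul_of_nonneg_left (cos_le_one χ) (by positivity : 0 ≤ l * s)
      linarith
    _ ≤ (1 - l) * max r s + l * max r s := by gcongr <;> simp
    _ = max r s := by ring
  refine ⟨t, ht, htmax, 1 - l, l, hl'_nonneg, hl, by ring, ?_⟩
  apply Complex.ext <;>
    simp only [Complex.real_smul, add_re, add_im, re_ofReal_mul, im_ofReal_mul,
      exp_ofReal_mul_I_re, exp_ofReal_mul_I_im, ofReal_re, ofReal_im, Real.cos_neg, Real.sin_neg]
  · ring
  · rw [hl', hl_def]; field_simp; ring

open Complex in
lemma exists_cosineLawSide_add_eq {r s ψ χ : ℝ} (hr : 0 < r) (hs : 0 < s) (hψ : 0 < ψ)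
    (hχ : 0 < χ) (hψχ : ψ + χ < π) :
    ∃ t, 0 < t ∧ t ≤ max r s ∧
      cosineLawSide t r ψ + cosineLawSide t s χ = cosineLawSide r s (ψ + χ) := by
  obtain ⟨t, ht, htmax, hmem⟩ := exists_ofReal_mem_segment_mul_exp hr hs hψ hχ hψχ
  refine ⟨t, ht, htmax, ?_⟩
  have hX : (t : ℂ) = t * exp (↑(0 : ℝ) * I) := by simp
  have hXY : cosineLawSide t r ψ = dist (r * exp (ψ * I)) (t : ℂ) := by
    rw [dist_comm, dist_eq_norm, hX, ← cosineLawSide_sub_eq_norm, zero_sub, cosineLawSide_neg]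
  have hXZ : cosineLawSide t s χ = dist (t : ℂ) (s * exp (↑(-χ) * I)) := by
    rw [dist_eq_norm, hX, ← cosineLawSide_sub_eq_norm, zero_sub, neg_neg]
  have hYZ : cosineLawSide r s (ψ + χ) = dist (r * exp (ψ * I)) (s * exp (↑(-χ) * I)) := by
    rw [dist_eq_norm, ← cosineLawSide_sub_eq_norm, sub_neg_eq_add]
  rw [hXY, hXZ, hYZ, dist_add_dist_of_mem_segment hmem]

lemma cmpAngle_nonneg (κ a b c : ℝ) : 0 ≤ cmpAngle κ a b c := by
  unfold cmpAngle; split_ifs <;> exact arccos_nonneg _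

lemma cmpAngle_le_pi (κ a b c : ℝ) : cmpAngle κ a b c ≤ π := by
  unfold cmpAngle; split_ifs <;> exact arccos_le_pi _

section Metric

variable {X : Type*} [MetricSpace X] {p x y : X}

lemma cos_cmpAngle_zero_dist (hx : 0 < dist p x) (hy : 0 < dist p y) :
    cos (cmpAngle 0 (dist p x) (dist p y) (dist x y)) =
      (dist p x ^ 2 + dist p y ^ 2 - dist x y ^ 2) / (2 * dist p x * dist p y) := by
  have hlow : |dist p x - dist p y| ≤ dist x y := by
    simpa only [dist_comm p] using abs_dist_sub_le x y p
  have hupp : dist x y ≤ dist p x + dist p y := dist_triangle_left x y p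
  have hsq : (dist p x - dist p y) ^ 2 ≤ dist x y ^ 2 := by
    simpa only [sq_abs] using pow_le_pow_left₀ (abs_nonneg _) hlow 2
  have hxy : 0 < 2 * dist p x * dist p y := by positivity
  rw [cmpAngle, if_neg (lt_irrefl 0), if_pos rfl, cos_arccos]
  · rw [le_div_iff₀ hxy]; nlinarith [dist_nonneg (x := x) (y := y)]
  · rw [div_le_one hxy]; nlinarith

lemma dist_le_cosineLawSide_of_cmpAngle_le {θ : ℝ} (hx : 0 < dist p x) (hy : 0 < dist p y)
    (hθ : θ ≤ π) (h : cmpAngle 0 (dist p x) (dist p y) (dist x y) ≤ θ) :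
    dist x y ≤ cosineLawSide (dist p x) (dist p y) θ := by
  have hcos := cos_le_cos_of_nonneg_of_le_pi (cmpAngle_nonneg _ _ _ _) hθ h
  rw [cos_cmpAngle_zero_dist hx hy, le_div_iff₀ (by positivity)] at hcos
  exact (le_abs_self _).trans (Real.abs_le_sqrt (by linarith))

lemma cosineLawSide_lt_dist_of_lt_cmpAngle {θ : ℝ} (hx : 0 < dist p x) (hy : 0 < dist p y)
    (hθ : 0 ≤ θ) (h : θ < cmpAngle 0 (dist p x) (dist p y) (dist x y)) :
    cosineLawSide (dist p x) (dist p y) θ < dist x y := by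
  have hcos := cos_lt_cos_of_nonneg_of_le_pi hθ (cmpAngle_le_pi _ _ _ _) h
  rw [cos_cmpAngle_zero_dist hx hy, div_lt_iff₀ (by positivity)] at hcos
  have hnonneg := mul_nonneg (mul_pos hx hy).le (sub_nonneg.2 (cos_le_one θ))
  rw [cosineLawSide, Real.sqrt_lt (by nlinarith [sq_nonneg (dist p x - dist p y)]) dist_nonneg]
  nlinarith

end Metric

lemma cmpAngle_zero_dist_le_add {X : Type*} [MetricSpace X] {p y z : X} {ψ χ : ℝ}
    (hψ : 0 < ψ) (hχ : 0 < χ) (hy : 0 < dist p y) (hz : 0 < dist p z)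
    (hsplit : ∀ t ∈ Ioc 0 (max (dist p y) (dist p z)), ∃ x, dist p x = t ∧
      cmpAngle 0 t (dist p y) (dist x y) ≤ ψ ∧ cmpAngle 0 t (dist p z) (dist x z) ≤ χ) :
    cmpAngle 0 (dist p y) (dist p z) (dist y z) ≤ ψ + χ := by
  rcases le_or_gt π (ψ + χ) with hπ | hπ
  · exact (cmpAngle_le_pi _ _ _ _).trans hπ
  by_contra! hlt
  obtain ⟨t, ht, htmax, hsides⟩ := exists_cosineLawSide_add_eq hy hz hψ hχ hπ
  obtain ⟨x, rfl, hxy, hxz⟩ := hsplit t ⟨ht, htmax⟩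
  have := calc
    dist y z ≤ dist x y + dist x z := dist_triangle_left y z x
    _ ≤ cosineLawSide (dist p x) (dist p y) ψ + cosineLawSide (dist p x) (dist p z) χ :=
      add_le_add (dist_le_cosineLawSide_of_cmpAngle_le ht hy (by linarith) hxy)
        (dist_le_cosineLawSide_of_cmpAngle_le ht hz (by linarith) hxz)
    _ = cosineLawSide (dist p y) (dist p z) (ψ + χ) := hsides
    _ < dist y z := cosineLawSide_lt_dist_of_lt_cmpAngle hy hz (by positivity) hlt
  exact this.false

section AlexAngle

variable {κ θ : ℝ} {X : Type*} [MetricSpace X] (p : X) (σ τ : ℝ → X)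

lemma bddAbove_cmpAngle_image (S : Set (ℝ × ℝ)) :
    BddAbove ((fun tt : ℝ × ℝ => cmpAngle κ (dist p (σ tt.1)) (dist p (τ tt.2))
      (dist (σ tt.1) (τ tt.2))) '' S) :=
  ⟨π, by rintro _ ⟨_, _, rfl⟩; exact cmpAngle_le_pi _ _ _ _⟩

lemma bddBelow_range_sSup_cmpAngle_image :
    BddBelow (range fun ε : {e : ℝ // 0 < e} => sSup ((fun tt : ℝ × ℝ =>
      cmpAngle κ (dist p (σ tt.1)) (dist p (τ tt.2)) (dist (σ tt.1) (τ tt.2))) ''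
        (Ioo 0 (ε : ℝ) ×ˢ Ioo 0 (ε : ℝ)))) :=
  ⟨0, by
    rintro _ ⟨ε, rfl⟩
    exact Real.sSup_nonneg (by rintro _ ⟨_, _, rfl⟩; exact cmpAngle_nonneg _ _ _ _)⟩

lemma alexAngleWith_nonneg : 0 ≤ alexAngleWith κ p σ τ :=
  le_ciInf fun _ => Real.sSup_nonneg (by rintro _ ⟨_, _, rfl⟩; exact cmpAngle_nonneg _ _ _ _)

lemma exists_forall_cmpAngle_lt_of_alexAngleWith_lt (h : alexAngleWith κ p σ τ < θ) :
    ∃ ε > 0, ∀ s ∈ Ioo 0 ε, ∀ t ∈ Ioo 0 ε,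
      cmpAngle κ (dist p (σ s)) (dist p (τ t)) (dist (σ s) (τ t)) < θ := by
  obtain ⟨ε, hε⟩ := exists_lt_of_ciInf_lt h
  exact ⟨ε, ε.2, fun s hs t ht =>
    (le_csSup (bddAbove_cmpAngle_image p σ τ (Ioo 0 (ε : ℝ) ×ˢ Ioo 0 (ε : ℝ)))
      ⟨(s, t), ⟨hs, ht⟩, rfl⟩).trans_lt hε⟩

lemma exists_lt_cmpAngle_of_lt_alexAngleWith (h : θ < alexAngleWith κ p σ τ) {ε : ℝ}
    (hε : 0 < ε) : ∃ s ∈ Ioo 0 ε, ∃ t ∈ Ioo 0 ε,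
      θ < cmpAngle κ (dist p (σ s)) (dist p (τ t)) (dist (σ s) (τ t)) := by
  have hne := ((nonempty_Ioo.2 hε).prod (nonempty_Ioo.2 hε)).image fun tt : ℝ × ℝ =>
    cmpAngle κ (dist p (σ tt.1)) (dist p (τ tt.2)) (dist (σ tt.1) (τ tt.2))
  obtain ⟨_, ⟨⟨s, t⟩, ⟨hs, ht⟩, rfl⟩, hlt⟩ := exists_lt_of_lt_csSup hne
    (h.trans_le (ciInf_le (bddBelow_range_sSup_cmpAngle_image p σ τ) ⟨ε, hε⟩))
  exact ⟨s, hs, t, ht, hlt⟩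

end AlexAngle

lemma dist_apply_zero_eq_of_dist_eq_abs_sub {X : Type*} [MetricSpace X] {c : ℝ → X} {L : ℝ}
    (hc : ∀ s ∈ Icc 0 L, ∀ t ∈ Icc 0 L, dist (c s) (c t) = |s - t|) {t : ℝ} (ht : t ∈ Icc 0 L) :
    dist (c 0) (c t) = t := by
  rw [hc 0 ⟨le_rfl, ht.1.trans ht.2⟩ t ht, zero_sub, abs_neg, abs_of_nonneg ht.1]

/-- The Alexandrov angles between three geodesic paths issuing from a
common point of a metric space satisfy the triangle inequality. -/
theorem alexAngle_triangle_inequality {X : Type*} [MetricSpace X]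
    (p : X) (c c' c'' : ℝ → X) (L L' L'' : ℝ) (hL : 0 < L) (hL' : 0 < L') (hL'' : 0 < L'')
    (hc0 : c 0 = p) (hc'0 : c' 0 = p) (hc''0 : c'' 0 = p)
    (hc : ∀ s ∈ Set.Icc 0 L, ∀ t ∈ Set.Icc 0 L, dist (c s) (c t) = |s - t|)
    (hc' : ∀ s ∈ Set.Icc 0 L', ∀ t ∈ Set.Icc 0 L', dist (c' s) (c' t) = |s - t|)
    (hc'' : ∀ s ∈ Set.Icc 0 L'', ∀ t ∈ Set.Icc 0 L'', dist (c'' s) (c'' t) = |s - t|) :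
    alexAngleWith 0 p c' c'' ≤ alexAngleWith 0 p c c' + alexAngleWith 0 p c c'' := by
  set α := alexAngleWith 0 p c' c''
  set β := alexAngleWith 0 p c c'
  set γ := alexAngleWith 0 p c c''
  by_contra! hlt
  have hβ : 0 ≤ β := alexAngleWith_nonneg p c c'
  have hγ : 0 ≤ γ := alexAngleWith_nonneg p c c''
  set δ := (α - β - γ) / 3 with hδ
  obtain ⟨ψ, χ, hψ, hχ, hψχ⟩ : ∃ ψ χ, β < ψ ∧ γ < χ ∧ ψ + χ < α :=
    ⟨β + δ, γ + δ, by linarith, by linarith, by linarith⟩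
  obtain ⟨ε₁, hε₁, hangle₁⟩ := exists_forall_cmpAngle_lt_of_alexAngleWith_lt p c c' hψ
  obtain ⟨ε₂, hε₂, hangle₂⟩ := exists_forall_cmpAngle_lt_of_alexAngleWith_lt p c c'' hχ
  set ε := min (min ε₁ ε₂) (min L (min L' L''))
  obtain ⟨t₁, ht₁, t₂, ht₂, hangle⟩ :=
    exists_lt_cmpAngle_of_lt_alexAngleWith p c' c'' hψχ (ε := ε) (by positivity)
  have hε : ε ≤ ε₁ ∧ ε ≤ ε₂ ∧ ε ≤ L ∧ ε ≤ L' ∧ ε ≤ L'' := by simp [ε]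
  have hdist₁ : dist p (c' t₁) = t₁ :=
    hc'0 ▸ dist_apply_zero_eq_of_dist_eq_abs_sub hc' ⟨ht₁.1.le, by linarith [ht₁.2]⟩
  have hdist₂ : dist p (c'' t₂) = t₂ :=
    hc''0 ▸ dist_apply_zero_eq_of_dist_eq_abs_sub hc'' ⟨ht₂.1.le, by linarith [ht₂.2]⟩
  refine hangle.not_ge (cmpAngle_zero_dist_le_add (by linarith) (by linarith)
    (by rw [hdist₁]; exact ht₁.1) (by rw [hdist₂]; exact ht₂.1) fun t ht => ?_)
  rw [hdist₁, hdist₂] at ht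
  have htε : t < ε := ht.2.trans_lt (max_lt ht₁.2 ht₂.2)
  have hdist : dist p (c t) = t :=
    hc0 ▸ dist_apply_zero_eq_of_dist_eq_abs_sub hc ⟨ht.1.le, by linarith⟩
  refine ⟨c t, hdist, ?_, ?_⟩
  · simpa [hdist] using (hangle₁ t ⟨ht.1, by linarith⟩ t₁ ⟨ht₁.1, by linarith [ht₁.2]⟩).le
  · simpa [hdist] using (hangle₂ t ⟨ht.1, by linarith⟩ t₂ ⟨ht₂.1, by linarith [ht₂.2]⟩).le
end
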